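/- The relation ≤₀ is a pre-well-order on the set of worms W_{Γ₀}: it is a reflexive and transitive relation, it is total (for all worms A, B, either A ≤₀ B or B ≤₀ A), and every nonempty set of worms has a ≤₀-minimal element. -/

import Mathlib

open Ordinal

/-- The binary Veblen function: `veblen 0 β = ω ^ β` and, for `α > 0`, `veblen α`
enumerates the common fixed points of the functions `veblen ξ` for `ξ < α`. -/
noncomputable def veblen (α : Ordinal.{0}) : Ordinal.{0} → Ordinal.{0} :=
  if α = 0 then fun β => omega0 ^ β
  else derivFamily (familyOfBFamily α fun ξ h => veblen ξ)
termination_by α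
decreasing_by exact h

/-- The Feferman–Schütte ordinal `Γ₀`: the least nonzero ordinal closed under the
binary Veblen function. -/
noncomputable def Gamma0 : Ordinal.{0} :=
  sInf {L | 0 < L ∧ ∀ α < L, ∀ β < L, _root_.veblen α β < L}

/-- Strictly positive modal formulas with modalities indexed by ordinals. -/
inductive RCF : Type 1 where
  | top : RCF
  | var : ℕ → RCF
  | and : RCF → RCF → RCF
  | dia : Ordinal.{0} → RCF → RCF

/-- `φ.bounded Λ` holds iff all modalities occurring in `φ` are `< Λ`,
i.e. iff `φ` is an `RC_Λ`-formula. -/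
def RCF.bounded (Λ : Ordinal) : RCF → Prop
  | .top => True
  | .var _ => True
  | .and φ ψ => φ.bounded Λ ∧ ψ.bounded Λ
  | .dia α φ => α < Λ ∧ φ.bounded Λ

/-- Worms: formulas built from `⊤` by prefixing modalities. -/
def RCF.isWorm : RCF → Prop
  | .top => True
  | .var _ => False
  | .and _ _ => False
  | .dia _ φ => φ.isWorm

/-- The signature of a formula: the set of ordinals occurring in its modalities. -/
def RCF.sig : RCF → Set Ordinal
  | .top => ∅
  | .var _ => ∅
  | .and φ ψ => φ.sig ∪ ψ.sig
  | .dia α φ => insert α φ.sig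

/-- Derivability in the reflection calculus `RC_Λ`. -/
inductive RCder (Λ : Ordinal) : RCF → RCF → Prop where
  | id : ∀ φ, φ.bounded Λ → RCder Λ φ φ
  | topI : ∀ φ, φ.bounded Λ → RCder Λ φ .top
  | andE₁ : ∀ φ ψ, φ.bounded Λ → ψ.bounded Λ → RCder Λ (.and φ ψ) φ
  | andE₂ : ∀ φ ψ, φ.bounded Λ → ψ.bounded Λ → RCder Λ (.and φ ψ) ψ
  | diaTrans : ∀ α φ, α < Λ → φ.bounded Λ → RCder Λ (.dia α (.dia α φ)) (.dia α φ)
  | diaDown : ∀ α β φ, β < α → α < Λ → φ.bounded Λ → RCder Λ (.dia α φ) (.dia β φ)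
  | diaConj : ∀ α β φ ψ, β < α → α < Λ → φ.bounded Λ → ψ.bounded Λ →
      RCder Λ (.and (.dia α φ) (.dia β ψ)) (.dia α (.and φ (.dia β ψ)))
  | andI : ∀ {φ ψ χ}, RCder Λ φ ψ → RCder Λ φ χ → RCder Λ φ (.and ψ χ)
  | cut : ∀ {φ ψ χ}, RCder Λ φ ψ → RCder Λ ψ χ → RCder Λ φ χ
  | diaMono : ∀ {φ ψ} (α), α < Λ → RCder Λ φ ψ → RCder Λ (.dia α φ) (.dia α ψ)

/-- Membership in `W_{Γ₀}`: worms of `RC_{Γ₀}`. -/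
def isGWorm (A : RCF) : Prop := A.isWorm ∧ A.bounded Gamma0

/-- `WormLT B A` is the consistency ordering `B <₀ A` on worms of `W_{Γ₀}`:
`A ⊢_{RC_{Γ₀}} ⟨0⟩B`. -/
def WormLT (B A : RCF) : Prop :=
  isGWorm A ∧ isGWorm B ∧ RCder Gamma0 A (.dia 0 B)

/- The order type `o A` of a worm, defined recursively by
`o A = sup_{B <₀ A} (o B + 1)` (well-defined since `<₀` is well-founded). -/
open Classical in
noncomputable def wormO (A : RCF) : Ordinal.{0} :=
  if h : WellFounded WormLT then
    h.fix (C := fun _ => Ordinal.{0})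
      (fun B ih => ⨆ C : {C : RCF // WormLT C B}, (ih C.1 C.2 + 1)) A
  else 0

/-- `wleq B A` is `B ≤₀ A`: either `B <₀ A` (i.e. `A ⊢_{RC_{Γ₀}} ⟨0⟩B`), or
`A` and `B` are provably equivalent in `RC_{Γ₀}`. -/
def wleq (B A : RCF) : Prop :=
  RCder Gamma0 A (.dia 0 B) ∨ (RCder Gamma0 A B ∧ RCder Gamma0 B A)

/-!
Every worm `w` gets an ordinal `o w` built from the Veblen functions. By induction on the total
length of two worms `w`, `v` of `RC_Λ`, for any `Λ`: `o v < o w` gives `w ⊢ ⟨b⟩v` for every `b`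
below all their modalities, and `o v = o w` makes `w` and `v` equivalent; the converse is never
needed. The induction splits both worms at the first occurrence of their common least modality
`m`. The part `u` before it contributes an additively principal summand `1 + o (u - m)`, so
comparing the order types of the pieces tells how to reassemble them with the axioms
`⟨α⟩⟨α⟩φ ⊢ ⟨α⟩φ` and `⟨α⟩φ ∧ ⟨β⟩ψ ⊢ ⟨α⟩(φ ∧ ⟨β⟩ψ)`. Totality and well-foundedness of `≤₀` are then
inherited from the ordinals; reflexivity and transitivity are immediate derivations.
-/

/-- The hyperexponential: `hyperexp a = veblen η₁ ∘ ⋯ ∘ veblen ηₖ` for the Cantor normal form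
`a = ω ^ η₁ + ⋯ + ω ^ ηₖ`. -/
noncomputable def hyperexp (a δ : Ordinal.{u}) : Ordinal.{u} :=
  if a = 0 then δ else Ordinal.veblen (log ω a) (hyperexp (a - ω ^ log ω a) δ)
termination_by a
decreasing_by exact sub_omega0_opow_log_lt ‹_›

@[simp]
theorem hyperexp_zero (δ : Ordinal) : hyperexp 0 δ = δ := by
  rw [hyperexp, if_pos rfl]

theorem hyperexp_of_ne_zero {a : Ordinal} (ha : a ≠ 0) (δ : Ordinal) :
    hyperexp a δ = Ordinal.veblen (log ω a) (hyperexp (a - ω ^ log ω a) δ) := by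
  rw [hyperexp, if_neg ha]

theorem hyperexp_omega0_opow_add (η r δ : Ordinal) :
    hyperexp (ω ^ η + r) δ = Ordinal.veblen η (hyperexp r δ) := by
  have hη : ω ^ η < ω ^ (η + 1) := (opow_lt_opow_iff_right one_lt_omega0).2 (lt_add_one η)
  rcases lt_or_ge r (ω ^ (η + 1)) with hr | hr
  · have hne : ω ^ η + r ≠ 0 := (add_pos_of_pos_of_nonneg (opow_pos η omega0_pos) zero_le).ne'
    have hlog : log ω (ω ^ η + r) = η := by
      rw [log_eq_iff one_lt_omega0 hne]
      exact ⟨le_self_add, isPrincipal_add_omega0_opow _ hη hr⟩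
    rw [hyperexp_of_ne_zero hne, hlog, Ordinal.add_sub_cancel]
  · -- `r` absorbs `ω ^ η`, and the values of `veblen (log ω r)` are fixed by `veblen η`
    have hr₀ : r ≠ 0 := ((opow_pos _ omega0_pos).trans_le hr).ne'
    have hlog : η < log ω r := (lt_add_one η).trans_le (le_log_of_opow_le one_lt_omega0 hr)
    rw [add_of_omega0_opow_le hη hr, hyperexp_of_ne_zero hr₀, Ordinal.veblen_veblen_of_lt hlog]

theorem hyperexp_add (a b δ : Ordinal) : hyperexp (a + b) δ = hyperexp a (hyperexp b δ) := by
  induction a using WellFoundedLT.induction with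
  | _ a ih =>
    rcases eq_or_ne a 0 with rfl | ha
    · simp
    have hsplit : ω ^ log ω a + (a - ω ^ log ω a) = a :=
      Ordinal.add_sub_cancel_of_le (opow_log_le_self ω ha)
    conv_lhs => rw [← hsplit, add_assoc, hyperexp_omega0_opow_add,
      ih _ (sub_omega0_opow_log_lt ha)]
    rw [hyperexp_of_ne_zero ha]

theorem hyperexp_strictMono (a : Ordinal) : StrictMono (hyperexp a) := by
  induction a using WellFoundedLT.induction with
  | _ a ih =>
    intro x y hxy
    rcases eq_or_ne a 0 with rfl | ha
    · simpa using hxy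
    rw [hyperexp_of_ne_zero ha, hyperexp_of_ne_zero ha]
    exact Ordinal.veblen_right_strictMono _ (ih _ (sub_omega0_opow_log_lt ha) hxy)

theorem isPrincipal_add_hyperexp {a : Ordinal} (ha : a ≠ 0) (δ : Ordinal) :
    IsPrincipal (· + ·) (hyperexp a δ) := by
  obtain ⟨ε, hε⟩ := Ordinal.veblen_mem_range_opow (log ω a) (hyperexp (a - ω ^ log ω a) δ)
  rw [hyperexp_of_ne_zero ha, ← hε]
  exact isPrincipal_add_omega0_opow ε

theorem omega0_le_hyperexp {a δ : Ordinal} (ha : a ≠ 0) (hδ : δ ≠ 0) : ω ≤ hyperexp a δ := by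
  rw [hyperexp_of_ne_zero ha]
  calc ω = ω ^ (1 : Ordinal) := (opow_one ω).symm
    _ ≤ ω ^ δ := opow_le_opow_right omega0_pos (Order.one_le_iff_ne_zero.2 hδ)
    _ ≤ ω ^ hyperexp (a - ω ^ log ω a) δ :=
      opow_le_opow_right omega0_pos (hyperexp_strictMono _).le_apply
    _ = Ordinal.veblen 0 _ := (Ordinal.veblen_zero_apply _).symm
    _ ≤ _ := Ordinal.veblen_left_monotone _ zero_le

namespace Ordinal.IsPrincipal

variable {a b c p q : Ordinal}

theorem add_le_add_of_lt_add (hc : IsPrincipal (· + ·) c) (h : a < b + c) : a + c ≤ b + c := by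
  rcases le_or_gt a b with hab | hab
  · exact add_le_add_left hab c
  obtain ⟨d, rfl⟩ := exists_add_of_le hab.le
  rw [add_assoc, hc.add_eq_right ((add_lt_add_iff_left b).1 h)]

theorem lt_of_lt_add_of_add_lt_add (hq : IsPrincipal (· + ·) q) (h₁ : a < b + q)
    (h₂ : b + q < a + p) : q < p := by
  by_contra! hpq
  exact (h₂.trans_le ((add_le_add_right hpq a).trans (hq.add_le_add_of_lt_add h₁))).false

theorem eq_of_add_eq_add (hp : IsPrincipal (· + ·) p) (hq : IsPrincipal (· + ·) q) (hp₀ : p ≠ 0)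
    (hq₀ : q ≠ 0) (h : a + p = b + q) : p = q := by
  have hb : b < a + p := h ▸ lt_add_of_pos_right b (pos_iff_ne_zero.2 hq₀)
  have ha : a < b + q := h ▸ lt_add_of_pos_right a (pos_iff_ne_zero.2 hp₀)
  refine le_antisymm ?_ ?_
  · exact (add_le_add_iff_left b).1 (h ▸ hp.add_le_add_of_lt_add hb)
  · exact (add_le_add_iff_left a).1 (h ▸ hq.add_le_add_of_lt_add ha)

end Ordinal.IsPrincipal

namespace List

variable {α : Type*}

theorem takeWhile_ne_append_cons [DecidableEq α] {m : α} {u x : List α} (hm : m ∉ u) :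
    (u ++ m :: x).takeWhile (· ≠ m) = u := by
  rw [takeWhile_append_of_pos fun a ha => decide_eq_true (ne_of_mem_of_not_mem ha hm)]
  simp

theorem dropWhile_ne_append_cons [DecidableEq α] {m : α} {u x : List α} (hm : m ∉ u) :
    (u ++ m :: x).dropWhile (· ≠ m) = m :: x := by
  rw [dropWhile_append_of_pos fun a ha => decide_eq_true (ne_of_mem_of_not_mem ha hm)]
  simp

theorem length_takeWhile_ne_lt [DecidableEq α] {m : α} {w : List α} (h : m ∈ w) :
    (w.takeWhile (· ≠ m)).length < w.length := by
  obtain ⟨u, x, rfl, hm⟩ := eq_append_cons_of_mem h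
  rw [takeWhile_ne_append_cons hm]
  simp

theorem length_tail_dropWhile_ne_lt [DecidableEq α] {m : α} {w : List α} (h : m ∈ w) :
    (w.dropWhile (· ≠ m)).tail.length < w.length := by
  obtain ⟨u, x, rfl, hm⟩ := eq_append_cons_of_mem h
  rw [dropWhile_ne_append_cons hm]
  simp only [tail_cons, length_append, length_cons]
  omega

theorem exists_eq_append_cons_forall_lt [LinearOrder α] {m : α} {w : List α} (hm : m ∈ w)
    (h : ∀ γ ∈ w, m ≤ γ) : ∃ u x, w = u ++ m :: x ∧ (∀ γ ∈ u, m < γ) ∧ ∀ γ ∈ x, m ≤ γ := by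
  obtain ⟨u, x, rfl, hmu⟩ := eq_append_cons_of_mem hm
  refine ⟨u, x, rfl, fun γ hγ => (h γ (by simp [hγ])).lt_of_ne ?_, fun γ hγ => h γ (by simp [hγ])⟩
  rintro rfl
  exact hmu hγ

theorem exists_eq_append_cons_min [LinearOrder α] {w : List α} (hw : w ≠ []) :
    ∃ M u x, w = u ++ M :: x ∧ (∀ γ ∈ u, M < γ) ∧ ∀ γ ∈ x, M ≤ γ :=
  ⟨_, exists_eq_append_cons_forall_lt (min_mem hw) fun _ => min_le_of_mem⟩

end List

/-- The order type of the worm with modalities `w`: if `m` is the least modality and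
`w = u ++ m :: x` with `m ∉ u`, it is `hyperexp m (o (x - m) + (1 + o (u - m)))`, where `- m` lowers
every modality by `m`. -/
noncomputable def wormOrd : List Ordinal.{u} → Ordinal.{u}
  | [] => 0
  | γ :: t =>
    let m := (γ :: t).min (List.cons_ne_nil γ t)
    hyperexp m (wormOrd (((γ :: t).dropWhile (· ≠ m)).tail.map (· - m)) +
      (1 + wormOrd (((γ :: t).takeWhile (· ≠ m)).map (· - m))))
termination_by w => w.length
decreasing_by
  · simpa using List.length_tail_dropWhile_ne_lt (List.min_mem (List.cons_ne_nil γ t))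
  · simpa using List.length_takeWhile_ne_lt (List.min_mem (List.cons_ne_nil γ t))

noncomputable def wormOrdFrom (m : Ordinal.{u}) (w : List Ordinal.{u}) : Ordinal.{u} :=
  wormOrd (w.map (· - m))

section WormOrd

variable {m : Ordinal} {u v w x z : List Ordinal}

@[simp]
theorem wormOrd_nil : wormOrd ([] : List Ordinal) = 0 := by
  rw [wormOrd]

@[simp]
theorem wormOrdFrom_nil (m : Ordinal) : wormOrdFrom m [] = 0 := by
  simp [wormOrdFrom]

@[simp]
theorem wormOrdFrom_zero (w : List Ordinal) : wormOrdFrom 0 w = wormOrd w := by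
  simp [wormOrdFrom]

theorem wormOrd_append_cons (hu : ∀ γ ∈ u, m < γ) (hx : ∀ γ ∈ x, m ≤ γ) :
    wormOrd (u ++ m :: x) = hyperexp m (wormOrdFrom m x + (1 + wormOrdFrom m u)) := by
  have hmin : (u ++ m :: x).min (by simp) = m := by
    rw [List.min_eq_iff]
    refine ⟨by simp, fun γ hγ => ?_⟩
    simp only [List.mem_append, List.mem_cons] at hγ
    rcases hγ with hγ | rfl | hγ
    exacts [(hu γ hγ).le, le_rfl, hx γ hγ]
  have hmu : m ∉ u := fun h => (hu m h).false
  obtain ⟨γ, t, hγt⟩ := List.exists_cons_of_ne_nil (List.append_ne_nil_of_right_ne_nil u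
    (List.cons_ne_nil m x))
  rw [hγt, wormOrd]
  simp only [← hγt, hmin, List.takeWhile_ne_append_cons hmu, List.dropWhile_ne_append_cons hmu,
    List.tail_cons, wormOrdFrom]

theorem wormOrdFrom_append_cons (hu : ∀ γ ∈ u, m < γ) (x : List Ordinal) :
    wormOrdFrom m (u ++ m :: x) = wormOrdFrom m x + (1 + wormOrdFrom m u) := by
  have hu' : ∀ γ ∈ u.map (· - m), 0 < γ := by
    simpa [lt_sub] using hu
  rw [wormOrdFrom, List.map_append, List.map_cons, Ordinal.sub_self,
    wormOrd_append_cons hu' fun _ _ => zero_le, hyperexp_zero, wormOrdFrom_zero, wormOrdFrom_zero]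
  rfl

theorem exists_wormOrd_eq_hyperexp (hw : w ≠ []) : ∃ M ∈ w, ∃ δ ≠ 0, wormOrd w = hyperexp M δ := by
  obtain ⟨M, u, x, rfl, hu, hx⟩ := List.exists_eq_append_cons_min hw
  exact ⟨M, by simp, _, by positivity, wormOrd_append_cons hu hx⟩

theorem wormOrd_pos_iff : 0 < wormOrd w ↔ w ≠ [] := by
  refine ⟨fun h hw => by simp [hw] at h, fun hw => ?_⟩
  obtain ⟨M, -, δ, hδ, h⟩ := exists_wormOrd_eq_hyperexp hw
  exact h ▸ (pos_iff_ne_zero.2 hδ).trans_le (hyperexp_strictMono M).le_apply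

theorem wormOrdFrom_pos_iff : 0 < wormOrdFrom m w ↔ w ≠ [] := by
  simp [wormOrdFrom, wormOrd_pos_iff]

theorem wormOrdFrom_map_sub {M : Ordinal} (h : m ≤ M) (w : List Ordinal) :
    wormOrdFrom (M - m) (w.map (· - m)) = wormOrdFrom M w := by
  simp only [wormOrdFrom, List.map_map, Function.comp_def, Ordinal.sub_sub,
    Ordinal.add_sub_cancel_of_le h]

theorem wormOrd_eq_hyperexp_wormOrdFrom (hw : w ≠ []) (h : ∀ γ ∈ w, m ≤ γ) :
    wormOrd w = hyperexp m (wormOrdFrom m w) := by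
  obtain ⟨M, u, x, rfl, hu, hx⟩ := List.exists_eq_append_cons_min hw
  have hmM : m ≤ M := h M (by simp)
  have hu' : ∀ γ ∈ u.map (· - m), M - m < γ := by
    simpa [lt_sub, Ordinal.add_sub_cancel_of_le hmM] using hu
  have hx' : ∀ γ ∈ x.map (· - m), M - m ≤ γ := by
    simpa using fun γ hγ => Ordinal.sub_le.2 ((hx γ hγ).trans (Ordinal.le_add_sub γ m))
  conv_rhs => rw [wormOrdFrom, List.map_append, List.map_cons, wormOrd_append_cons hu' hx',
    wormOrdFrom_map_sub hmM, wormOrdFrom_map_sub hmM, ← hyperexp_add,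
    Ordinal.add_sub_cancel_of_le hmM]
  exact wormOrd_append_cons hu hx

theorem wormOrd_lt_wormOrd_iff (hv : ∀ γ ∈ v, m ≤ γ) (hw : ∀ γ ∈ w, m ≤ γ) :
    wormOrd v < wormOrd w ↔ wormOrdFrom m v < wormOrdFrom m w := by
  rcases eq_or_ne v [] with rfl | hv₀
  · simp [wormOrd_pos_iff, wormOrdFrom_pos_iff]
  rcases eq_or_ne w [] with rfl | hw₀
  · simp
  rw [wormOrd_eq_hyperexp_wormOrdFrom hv₀ hv, wormOrd_eq_hyperexp_wormOrdFrom hw₀ hw,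
    (hyperexp_strictMono m).lt_iff_lt]

theorem wormOrd_eq_wormOrd_iff (hv : ∀ γ ∈ v, m ≤ γ) (hw : ∀ γ ∈ w, m ≤ γ) :
    wormOrd v = wormOrd w ↔ wormOrdFrom m v = wormOrdFrom m w := by
  simp only [le_antisymm_iff, ← not_lt, wormOrd_lt_wormOrd_iff hv hw,
    wormOrd_lt_wormOrd_iff hw hv]

theorem exists_wormOrdFrom_eq_hyperexp (hz : z ≠ []) (h : ∀ γ ∈ z, m < γ) :
    ∃ M ≠ 0, ∃ δ ≠ 0, wormOrdFrom m z = hyperexp M δ := by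
  obtain ⟨M, hM, δ, hδ, he⟩ := exists_wormOrd_eq_hyperexp (w := z.map (· - m)) (by simpa using hz)
  obtain ⟨γ, hγ, rfl⟩ := List.mem_map.1 hM
  exact ⟨γ - m, (lt_sub.2 (by simpa using h γ hγ)).ne', δ, hδ, he⟩

theorem one_add_wormOrdFrom (hz : z ≠ []) (h : ∀ γ ∈ z, m < γ) :
    1 + wormOrdFrom m z = wormOrdFrom m z := by
  obtain ⟨M, hM, δ, hδ, he⟩ := exists_wormOrdFrom_eq_hyperexp hz h
  rw [he]
  exact (isPrincipal_add_hyperexp hM δ).add_eq_right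
    (one_lt_omega0.trans_le (omega0_le_hyperexp hM hδ))

theorem isPrincipal_one_add_wormOrdFrom (h : ∀ γ ∈ z, m < γ) :
    IsPrincipal (· + ·) (1 + wormOrdFrom m z) := by
  rcases eq_or_ne z [] with rfl | hz
  · simp
  obtain ⟨M, hM, δ, -, he⟩ := exists_wormOrdFrom_eq_hyperexp hz h
  rw [one_add_wormOrdFrom hz h, he]
  exact isPrincipal_add_hyperexp hM δ

end WormOrd
namespace RCder

variable {Λ α β : Ordinal.{0}} {φ ψ χ : RCF}

theorem bounded (h : RCder Λ φ ψ) : φ.bounded Λ ∧ ψ.bounded Λ := by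
  induction h with
  | id φ h => exact ⟨h, h⟩
  | topI φ h => exact ⟨h, trivial⟩
  | andE₁ φ ψ h₁ h₂ => exact ⟨⟨h₁, h₂⟩, h₁⟩
  | andE₂ φ ψ h₁ h₂ => exact ⟨⟨h₁, h₂⟩, h₂⟩
  | diaTrans α φ h₁ h₂ => exact ⟨⟨h₁, h₁, h₂⟩, ⟨h₁, h₂⟩⟩
  | diaDown α β φ hβ h₁ h₂ => exact ⟨⟨h₁, h₂⟩, ⟨hβ.trans h₁, h₂⟩⟩
  | diaConj α β φ ψ hβ h₁ h₂ h₃ =>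
    exact ⟨⟨⟨h₁, h₂⟩, ⟨hβ.trans h₁, h₃⟩⟩, ⟨h₁, h₂, hβ.trans h₁, h₃⟩⟩
  | andI _ _ ih₁ ih₂ => exact ⟨ih₁.1, ih₁.2, ih₂.2⟩
  | cut _ _ ih₁ ih₂ => exact ⟨ih₁.1, ih₂.2⟩
  | diaMono α hα _ ih => exact ⟨⟨hα, ih.1⟩, ⟨hα, ih.2⟩⟩

theorem dia_cut (h₁ : RCder Λ φ (.dia α ψ)) (h₂ : RCder Λ ψ χ) : RCder Λ φ (.dia α χ) :=
  cut h₁ (diaMono α h₁.bounded.2.1 h₂)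

theorem dia_trans (h₁ : RCder Λ φ (.dia α ψ)) (h₂ : RCder Λ ψ (.dia α χ)) :
    RCder Λ φ (.dia α χ) :=
  cut (h₁.dia_cut h₂) (diaTrans α χ h₁.bounded.2.1 h₂.bounded.2.2)

theorem dia_of_le (h : RCder Λ φ (.dia α ψ)) (hβα : β ≤ α) : RCder Λ φ (.dia β ψ) := by
  rcases hβα.lt_or_eq with hβα | rfl
  · exact cut h (diaDown α β ψ hβα h.bounded.2.1 h.bounded.2.2)
  · exact h

theorem dia_and_dia (h₁ : RCder Λ φ (.dia α ψ)) (h₂ : RCder Λ φ (.dia β χ)) (hβα : β < α) :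
    RCder Λ φ (.dia α (.and ψ (.dia β χ))) :=
  cut (andI h₁ h₂) (diaConj α β ψ χ hβα h₁.bounded.2.1 h₁.bounded.2.2 h₂.bounded.2.2)

end RCder

namespace RCF

def worm : List Ordinal.{0} → RCF
  | [] => .top
  | γ :: t => .dia γ (worm t)

def modalities : RCF → List Ordinal.{0}
  | .dia α φ => α :: φ.modalities
  | _ => []

theorem worm_modalities {A : RCF} (hA : A.isWorm) : worm A.modalities = A := by
  induction A with
  | top => rfl
  | var => exact hA.elim
  | and => exact hA.elim
  | dia α φ ih => exact congrArg (dia α) (ih hA)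

theorem bounded_worm_iff {Λ : Ordinal.{0}} {w : List Ordinal.{0}} :
    (worm w).bounded Λ ↔ ∀ γ ∈ w, γ < Λ := by
  induction w with
  | nil => simp [worm, bounded]
  | cons γ t ih => simp [worm, bounded, ih]

end RCF

open RCF

section WormDerivations

variable {Λ m : Ordinal.{0}} {φ : RCF}

theorem der_worm_append (u x : List Ordinal.{0}) (h : ∀ γ ∈ u ++ x, γ < Λ) :
    RCder Λ (worm (u ++ x)) (worm u) := by
  induction u with
  | nil => exact .topI _ (bounded_worm_iff.2 h)
  | cons γ t ih =>
    exact .diaMono γ (h γ (by simp)) (ih fun δ hδ => h δ (by simp [hδ]))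

theorem der_worm_append_cons_dia {u x : List Ordinal.{0}} (hu : ∀ γ ∈ u, m ≤ γ)
    (h : ∀ γ ∈ u ++ m :: x, γ < Λ) :
    RCder Λ (worm (u ++ m :: x)) (.dia m (worm x)) := by
  induction u with
  | nil => exact .id _ (bounded_worm_iff.2 h)
  | cons γ t ih =>
    have hγ : RCder Λ (worm (γ :: t ++ m :: x)) (.dia γ (worm (t ++ m :: x))) :=
      .id _ (bounded_worm_iff.2 h)
    exact (hγ.dia_of_le (hu γ (by simp))).dia_trans
      (ih (fun δ hδ => hu δ (by simp [hδ])) fun δ hδ => h δ (by simp [hδ]))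

theorem der_worm_append_cons {u x : List Ordinal.{0}} (hu : ∀ γ ∈ u, m < γ)
    (h₁ : RCder Λ φ (worm u)) (h₂ : RCder Λ φ (.dia m (worm x))) :
    RCder Λ φ (worm (u ++ m :: x)) := by
  induction u generalizing φ with
  | nil => exact h₂
  | cons γ t ih =>
    have hγt : RCder Λ φ (.dia γ (.and (worm t) (.dia m (worm x)))) :=
      h₁.dia_and_dia h₂ (hu γ (by simp))
    have hb := hγt.bounded.2.2
    exact hγt.dia_cut (ih (fun δ hδ => hu δ (by simp [hδ])) (.andE₁ _ _ hb.1 hb.2)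
      (.andE₂ _ _ hb.1 hb.2))

theorem der_dia_worm_append_cons {b : Ordinal.{0}} {s y : List Ordinal.{0}}
    (hs : ∀ γ ∈ s, m < γ) (hmb : m < b) (h₁ : RCder Λ φ (.dia b (worm s)))
    (h₂ : RCder Λ φ (.dia m (worm y))) : RCder Λ φ (.dia m (worm (s ++ m :: y))) := by
  have hb : RCder Λ φ (.dia b (.and (worm s) (.dia m (worm y)))) := h₁.dia_and_dia h₂ hmb
  have hsy := hb.bounded.2.2
  exact (hb.dia_cut (der_worm_append_cons hs (.andE₁ _ _ hsy.1 hsy.2)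
    (.andE₂ _ _ hsy.1 hsy.2))).dia_of_le hmb.le

end WormDerivations

def DerivableComparison (Λ m : Ordinal.{0}) (w v : List Ordinal.{0}) : Prop :=
  (wormOrdFrom m v < wormOrdFrom m w → ∀ b, (∀ γ ∈ w, b ≤ γ) → (∀ γ ∈ v, b ≤ γ) →
      RCder Λ (worm w) (.dia b (worm v))) ∧
  (wormOrdFrom m v = wormOrdFrom m w →
      RCder Λ (worm w) (worm v) ∧ RCder Λ (worm v) (worm w))

def DerivableComparisonBelow (Λ m : Ordinal.{0}) (n : ℕ) : Prop :=
  ∀ w v : List Ordinal.{0}, w.length + v.length < n → (∀ γ ∈ w, γ ∈ Set.Ico m Λ) →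
    (∀ γ ∈ v, γ ∈ Set.Ico m Λ) → DerivableComparison Λ m w v

theorem derivableComparison_zero_iff {Λ m : Ordinal.{0}} {w v : List Ordinal.{0}}
    (hw : ∀ γ ∈ w, m ≤ γ) (hv : ∀ γ ∈ v, m ≤ γ) :
    DerivableComparison Λ 0 w v ↔ DerivableComparison Λ m w v := by
  simp only [DerivableComparison, wormOrdFrom_zero, wormOrd_lt_wormOrd_iff hv hw,
    wormOrd_eq_wormOrd_iff hv hw]

section InductionStep

variable {Λ m : Ordinal.{0}} {n : ℕ}

theorem exists_dia_of_wormOrdFrom_lt {z q : List Ordinal.{0}} (IH : DerivableComparisonBelow Λ m n)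
    (hlen : z.length + q.length < n) (hz : ∀ γ ∈ z, γ ∈ Set.Ioo m Λ)
    (hq : ∀ γ ∈ q, γ ∈ Set.Ioo m Λ) (hlt : wormOrdFrom m q < wormOrdFrom m z) :
    ∃ b, m < b ∧ RCder Λ (worm z) (.dia b (worm q)) := by
  have hzq : z ++ q ≠ [] := by simp [wormOrdFrom_pos_iff.1 (zero_le.trans_lt hlt)]
  refine ⟨(z ++ q).min hzq, ?_, (IH z q hlen (fun γ hγ => Set.Ioo_subset_Ico_self (hz γ hγ))
    (fun γ hγ => Set.Ioo_subset_Ico_self (hq γ hγ))).1 hlt _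
    (fun γ hγ => List.min_le_of_mem (by simp [hγ])) fun γ hγ => List.min_le_of_mem (by simp [hγ])⟩
  rcases List.mem_append.1 (List.min_mem hzq) with h | h
  exacts [(hz _ h).1, (hq _ h).1]

/-- Used with `z = u`, `a = o (x - m)` when `w = u ++ m :: x`, and with `z = w`, `a = 0` when
`m ∉ w`. -/
theorem der_dia_append_cons_of_wormOrdFrom_lt {w z s y : List Ordinal.{0}} {a : Ordinal.{0}}
    (IH : DerivableComparisonBelow Λ m (w.length + (s ++ m :: y).length))
    (hzw : z.length ≤ w.length) (hw : ∀ γ ∈ w, γ ∈ Set.Ico m Λ)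
    (hz : ∀ γ ∈ z, γ ∈ Set.Ioo m Λ) (hv : ∀ γ ∈ s ++ m :: y, γ ∈ Set.Ico m Λ)
    (hs : ∀ γ ∈ s, m < γ) (hwz : RCder Λ (worm w) (worm z))
    (hsplit : wormOrdFrom m w = a + (1 + wormOrdFrom m z))
    (ha : a < wormOrdFrom m (s ++ m :: y)) (hlt : wormOrdFrom m (s ++ m :: y) < wormOrdFrom m w) :
    RCder Λ (worm w) (.dia m (worm (s ++ m :: y))) := by
  have hy : ∀ γ ∈ y, γ ∈ Set.Ico m Λ := fun γ hγ => hv γ (by simp [hγ])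
  have hsplit_v := wormOrdFrom_append_cons hs y
  have hsz : wormOrdFrom m s < wormOrdFrom m z := by
    rw [hsplit_v] at ha hlt
    rw [hsplit] at hlt
    exact (add_lt_add_iff_left 1).1
      ((isPrincipal_one_add_wormOrdFrom hs).lt_of_lt_add_of_add_lt_add ha hlt)
  obtain ⟨b, hmb, hzb⟩ := exists_dia_of_wormOrdFrom_lt IH (by grind) hz
    (fun γ hγ => ⟨hs γ hγ, (hv γ (by simp [hγ])).2⟩) hsz
  have hyv : wormOrdFrom m y < wormOrdFrom m (s ++ m :: y) :=
    hsplit_v ▸ lt_add_of_pos_right _ (by positivity)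
  have hwy : RCder Λ (worm w) (.dia m (worm y)) :=
    (IH w y (by grind) hw hy).1 (hyv.trans hlt) m (fun γ hγ => (hw γ hγ).1) fun γ hγ => (hy γ hγ).1
  exact der_dia_worm_append_cons hs hmb (hwz.cut hzb) hwy

theorem der_dia_of_wormOrdFrom_lt_of_append_cons {u x v : List Ordinal.{0}}
    (IH : DerivableComparisonBelow Λ m ((u ++ m :: x).length + v.length))
    (hu : ∀ γ ∈ u, m < γ) (hw : ∀ γ ∈ u ++ m :: x, γ ∈ Set.Ico m Λ)
    (hv : ∀ γ ∈ v, γ ∈ Set.Ico m Λ) (hlt : wormOrdFrom m v < wormOrdFrom m (u ++ m :: x)) :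
    RCder Λ (worm (u ++ m :: x)) (.dia m (worm v)) := by
  have hu' : ∀ γ ∈ u, γ ∈ Set.Ioo m Λ := fun γ hγ => ⟨hu γ hγ, (hw γ (by simp [hγ])).2⟩
  have hx : ∀ γ ∈ x, γ ∈ Set.Ico m Λ := fun γ hγ => hw γ (by simp [hγ])
  have hsplit := wormOrdFrom_append_cons hu x
  have hwu : RCder Λ (worm (u ++ m :: x)) (worm u) :=
    der_worm_append u (m :: x) fun γ hγ => (hw γ hγ).2
  rcases le_or_gt (wormOrdFrom m v) (wormOrdFrom m x) with hvx | hxv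
  · have hwx : RCder Λ (worm (u ++ m :: x)) (.dia m (worm x)) :=
      der_worm_append_cons_dia (fun γ hγ => (hu γ hγ).le) fun γ hγ => (hw γ hγ).2
    have hxv := IH x v (by grind) hx hv
    rcases hvx.lt_or_eq with hvx | hvx
    · exact hwx.dia_trans (hxv.1 hvx m (fun γ hγ => (hx γ hγ).1) fun γ hγ => (hv γ hγ).1)
    · exact hwx.dia_cut (hxv.2 hvx).1
  by_cases hmv : m ∈ v
  · obtain ⟨s, y, rfl, hs, -⟩ :=
      List.exists_eq_append_cons_forall_lt hmv fun γ hγ => (hv γ hγ).1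
    exact der_dia_append_cons_of_wormOrdFrom_lt IH (by grind) hw hu' hv hs hwu hsplit hxv hlt
  have hv' : ∀ γ ∈ v, m < γ := fun γ hγ => (hv γ hγ).1.lt_of_ne fun h => hmv (h ▸ hγ)
  have hv₀ : v ≠ [] := wormOrdFrom_pos_iff.1 (zero_le.trans_lt hxv)
  have hvu : wormOrdFrom m v < wormOrdFrom m u := by
    rw [← one_add_wormOrdFrom hv₀ hv'] at hxv
    rw [← one_add_wormOrdFrom hv₀ hv', hsplit, ← zero_add (1 + wormOrdFrom m v)] at hlt
    exact (add_lt_add_iff_left 1).1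
      ((isPrincipal_one_add_wormOrdFrom hv').lt_of_lt_add_of_add_lt_add (by simpa using hxv) hlt)
  obtain ⟨b, hmb, hub⟩ := exists_dia_of_wormOrdFrom_lt IH (by grind) hu'
    (fun γ hγ => ⟨hv' γ hγ, (hv γ hγ).2⟩) hvu
  exact (hwu.cut hub).dia_of_le hmb.le

theorem der_dia_of_wormOrdFrom_lt {w v : List Ordinal.{0}}
    (IH : DerivableComparisonBelow Λ m (w.length + v.length)) (hmem : m ∈ w ++ v)
    (hw : ∀ γ ∈ w, γ ∈ Set.Ico m Λ) (hv : ∀ γ ∈ v, γ ∈ Set.Ico m Λ)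
    (hlt : wormOrdFrom m v < wormOrdFrom m w) : RCder Λ (worm w) (.dia m (worm v)) := by
  by_cases hmw : m ∈ w
  · obtain ⟨u, x, rfl, hu, -⟩ :=
      List.exists_eq_append_cons_forall_lt hmw fun γ hγ => (hw γ hγ).1
    exact der_dia_of_wormOrdFrom_lt_of_append_cons IH hu hw hv hlt
  have hw' : ∀ γ ∈ w, m < γ := fun γ hγ => (hw γ hγ).1.lt_of_ne fun h => hmw (h ▸ hγ)
  have hw₀ : w ≠ [] := wormOrdFrom_pos_iff.1 (zero_le.trans_lt hlt)
  obtain ⟨s, y, rfl, hs, -⟩ := List.exists_eq_append_cons_forall_lt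
    ((List.mem_append.1 hmem).resolve_left hmw) fun γ hγ => (hv γ hγ).1
  exact der_dia_append_cons_of_wormOrdFrom_lt (a := 0) IH le_rfl hw
    (fun γ hγ => ⟨hw' γ hγ, (hw γ hγ).2⟩) hv hs
    (.id _ (bounded_worm_iff.2 fun γ hγ => (hw γ hγ).2))
    (by rw [zero_add, one_add_wormOrdFrom hw₀ hw']) (wormOrdFrom_pos_iff.2 (by simp)) hlt

theorem der_append_cons_of_wormOrdFrom_eq {u x v : List Ordinal.{0}}
    (IH : DerivableComparisonBelow Λ m ((u ++ m :: x).length + v.length))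
    (hu : ∀ γ ∈ u, m < γ) (hw : ∀ γ ∈ u ++ m :: x, γ ∈ Set.Ico m Λ)
    (hv : ∀ γ ∈ v, γ ∈ Set.Ico m Λ) (heq : wormOrdFrom m v = wormOrdFrom m (u ++ m :: x))
    (hvu : RCder Λ (worm v) (worm u)) : RCder Λ (worm v) (worm (u ++ m :: x)) := by
  have hx : ∀ γ ∈ x, γ ∈ Set.Ico m Λ := fun γ hγ => hw γ (by simp [hγ])
  have hxv : wormOrdFrom m x < wormOrdFrom m v :=
    heq ▸ (wormOrdFrom_append_cons hu x) ▸ lt_add_of_pos_right _ (by positivity)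
  exact der_worm_append_cons hu hvu ((IH v x (by grind) hv hx).1 hxv m
    (fun γ hγ => (hv γ hγ).1) fun γ hγ => (hx γ hγ).1)

theorem der_equiv_of_wormOrdFrom_eq_of_append_cons {u x v : List Ordinal.{0}}
    (IH : DerivableComparisonBelow Λ m ((u ++ m :: x).length + v.length))
    (hu : ∀ γ ∈ u, m < γ) (hw : ∀ γ ∈ u ++ m :: x, γ ∈ Set.Ico m Λ)
    (hv : ∀ γ ∈ v, γ ∈ Set.Ico m Λ) (heq : wormOrdFrom m v = wormOrdFrom m (u ++ m :: x)) :
    RCder Λ (worm (u ++ m :: x)) (worm v) ∧ RCder Λ (worm v) (worm (u ++ m :: x)) := by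
  have hu' : ∀ γ ∈ u, γ ∈ Set.Ico m Λ := fun γ hγ => hw γ (by simp [hγ])
  have hsplit := wormOrdFrom_append_cons hu x
  have hwu : RCder Λ (worm (u ++ m :: x)) (worm u) :=
    der_worm_append u (m :: x) fun γ hγ => (hw γ hγ).2
  by_cases hmv : m ∈ v
  · obtain ⟨s, y, rfl, hs, -⟩ :=
      List.exists_eq_append_cons_forall_lt hmv fun γ hγ => (hv γ hγ).1
    have hus : wormOrdFrom m s = wormOrdFrom m u :=
      add_left_cancel ((isPrincipal_one_add_wormOrdFrom hs).eq_of_add_eq_add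
        (isPrincipal_one_add_wormOrdFrom hu) (by positivity) (by positivity)
        (wormOrdFrom_append_cons hs y ▸ hsplit ▸ heq))
    obtain ⟨hus', hsu'⟩ := (IH u s (by grind) hu' fun γ hγ => hv γ (by simp [hγ])).2 hus
    have hvs : RCder Λ (worm (s ++ m :: y)) (worm s) :=
      der_worm_append s (m :: y) fun γ hγ => (hv γ hγ).2
    exact ⟨der_append_cons_of_wormOrdFrom_eq (add_comm (u ++ m :: x).length _ ▸ IH) hs hv hw
        heq.symm (hwu.cut hus'),
      der_append_cons_of_wormOrdFrom_eq IH hu hw hv heq (hvs.cut hsu')⟩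
  have hv' : ∀ γ ∈ v, m < γ := fun γ hγ => (hv γ hγ).1.lt_of_ne fun h => hmv (h ▸ hγ)
  have hv₀ : v ≠ [] := by
    rw [← wormOrdFrom_pos_iff (m := m), heq, wormOrdFrom_pos_iff]
    simp
  have huv : wormOrdFrom m v = wormOrdFrom m u := by
    refine add_left_cancel ((isPrincipal_one_add_wormOrdFrom hv').eq_of_add_eq_add (a := 0)
      (b := wormOrdFrom m x) (isPrincipal_one_add_wormOrdFrom hu) (by positivity) (by positivity)
      ?_)
    rw [zero_add, one_add_wormOrdFrom hv₀ hv', heq, hsplit]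
  obtain ⟨huv', hvu'⟩ := (IH u v (by grind) hu' hv).2 huv
  exact ⟨hwu.cut huv', der_append_cons_of_wormOrdFrom_eq IH hu hw hv heq hvu'⟩

theorem der_equiv_of_wormOrdFrom_eq {w v : List Ordinal.{0}}
    (IH : DerivableComparisonBelow Λ m (w.length + v.length)) (hmem : m ∈ w ++ v)
    (hw : ∀ γ ∈ w, γ ∈ Set.Ico m Λ) (hv : ∀ γ ∈ v, γ ∈ Set.Ico m Λ)
    (heq : wormOrdFrom m v = wormOrdFrom m w) :
    RCder Λ (worm w) (worm v) ∧ RCder Λ (worm v) (worm w) := by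
  by_cases hmw : m ∈ w
  · obtain ⟨u, x, rfl, hu, -⟩ :=
      List.exists_eq_append_cons_forall_lt hmw fun γ hγ => (hw γ hγ).1
    exact der_equiv_of_wormOrdFrom_eq_of_append_cons IH hu hw hv heq
  · obtain ⟨s, y, rfl, hs, -⟩ := List.exists_eq_append_cons_forall_lt
      ((List.mem_append.1 hmem).resolve_left hmw) fun γ hγ => (hv γ hγ).1
    exact (der_equiv_of_wormOrdFrom_eq_of_append_cons (add_comm w.length _ ▸ IH) hs hv hw
      heq.symm).symm

end InductionStep

theorem derivableComparison {Λ : Ordinal.{0}} {w v : List Ordinal.{0}} (hw : ∀ γ ∈ w, γ < Λ)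
    (hv : ∀ γ ∈ v, γ < Λ) : DerivableComparison Λ 0 w v := by
  induction hn : w.length + v.length using Nat.strong_induction_on generalizing w v with
  | _ n IH =>
  rcases eq_or_ne (w ++ v) [] with hwv | hwv
  · obtain ⟨rfl, rfl⟩ := List.append_eq_nil_iff.1 hwv
    exact ⟨fun h => (lt_irrefl _ h).elim, fun _ => ⟨.id _ trivial, .id _ trivial⟩⟩
  set m := (w ++ v).min hwv
  have hm : ∀ γ ∈ w ++ v, m ≤ γ := fun γ hγ => List.min_le_of_mem hγ
  have hw' : ∀ γ ∈ w, γ ∈ Set.Ico m Λ := fun γ hγ => ⟨hm γ (by simp [hγ]), hw γ hγ⟩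
  have hv' : ∀ γ ∈ v, γ ∈ Set.Ico m Λ := fun γ hγ => ⟨hm γ (by simp [hγ]), hv γ hγ⟩
  have IH' : DerivableComparisonBelow Λ m (w.length + v.length) := fun p q hpq hp hq =>
    (derivableComparison_zero_iff (fun γ hγ => (hp γ hγ).1) fun γ hγ => (hq γ hγ).1).1
      (IH _ (hn ▸ hpq) (fun γ hγ => (hp γ hγ).2) (fun γ hγ => (hq γ hγ).2) rfl)
  rw [derivableComparison_zero_iff (fun γ hγ => (hw' γ hγ).1) fun γ hγ => (hv' γ hγ).1]
  refine ⟨fun hlt b hbw hbv => ?_, der_equiv_of_wormOrdFrom_eq IH' (List.min_mem hwv) hw' hv'⟩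
  have hbm : b ≤ m := (List.le_min_iff hwv).2 fun γ hγ => by
    rcases List.mem_append.1 hγ with h | h
    exacts [hbw γ h, hbv γ h]
  exact (der_dia_of_wormOrdFrom_lt IH' (List.min_mem hwv) hw' hv' hlt).dia_of_le hbm

theorem wleq_trans {A B C : RCF} (h₁ : wleq A B) (h₂ : wleq B C) : wleq A C := by
  rcases h₂ with hCB | ⟨hCB, hBC⟩ <;> rcases h₁ with hBA | ⟨hBA, hAB⟩
  · exact .inl (hCB.dia_trans hBA)
  · exact .inl (hCB.dia_cut hBA)
  · exact .inl (hCB.cut hBA)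
  · exact .inr ⟨hCB.cut hBA, hAB.cut hBC⟩

theorem wleq_of_wormOrd_le {A B : RCF} (hA : isGWorm A) (hB : isGWorm B)
    (h : wormOrd A.modalities ≤ wormOrd B.modalities) : wleq A B := by
  have hc := derivableComparison (Λ := Gamma0) (w := B.modalities) (v := A.modalities)
    (bounded_worm_iff.1 (by rw [worm_modalities hB.1]; exact hB.2))
    (bounded_worm_iff.1 (by rw [worm_modalities hA.1]; exact hA.2))
  rw [DerivableComparison, wormOrdFrom_zero, wormOrdFrom_zero, worm_modalities hA.1,
    worm_modalities hB.1] at hc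
  rcases h.lt_or_eq with h | h
  · exact .inl (hc.1 h 0 (fun _ _ => zero_le) fun _ _ => zero_le)
  · exact .inr (hc.2 h)

/-- `≤₀` is a pre-well-order on `W_{Γ₀}`: reflexive, transitive, total, and
every nonempty set of worms has a `≤₀`-minimal element. -/
theorem wleq_preWellOrder :
    (∀ A, isGWorm A → wleq A A) ∧
    (∀ A B C, isGWorm A → isGWorm B → isGWorm C →
      wleq A B → wleq B C → wleq A C) ∧
    (∀ A B, isGWorm A → isGWorm B → wleq A B ∨ wleq B A) ∧
    (∀ S : Set RCF, (∀ A ∈ S, isGWorm A) → S.Nonempty →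
      ∃ M ∈ S, ∀ A ∈ S, wleq M A) := by
  refine ⟨fun A hA => .inr ⟨.id A hA.2, .id A hA.2⟩, fun A B C _ _ _ => wleq_trans,
    fun A B hA hB => ?_, fun S hS hne => ?_⟩
  · rcases le_total (wormOrd A.modalities) (wormOrd B.modalities) with h | h
    exacts [.inl (wleq_of_wormOrd_le hA hB h), .inr (wleq_of_wormOrd_le hB hA h)]
  · obtain ⟨M, hM, hmin⟩ :=
      (InvImage.wf (fun A : RCF => wormOrd A.modalities) wellFounded_lt).has_min S hne
    exact ⟨M, hM, fun A hA => wleq_of_wormOrd_le (hS M hM) (hS A hA) (not_lt.1 (hmin A hA))⟩
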